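/- The XSM GCM does not satisfy Set Inclusion: there exist a makespan function v satisfying (S1)–(S4), a finite set T, and sets T1 ⊆ T2 of transactions disjoint from T such that gas^XSM_{T∪T1}(T1) > gas^XSM_{T∪T2}(T2). In particular, for T = ∅, T1 = {tx1}, T2 = {tx1, tx2} with tx1 ≃ (1,{k1}), tx2 ≃ (1,{k2}) and v the optimal-scheduler makespan on at least 2 threads (so v(T1) = v(T2) = 1), gas^XSM_{T1}(T1) = 1/3 > 2/9 = gas^XSM_{T2}(T2). -/

import Mathlib

/-- The Exponentially-Split Makespan (XSM) GCM: `gas^XSM_T(tx) = v(T)/3^{|T|}`. -/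
noncomputable def xsmGas {Tx : Type} [DecidableEq Tx]
    (v : Finset Tx → ℝ) (T : Finset Tx) (_tx : Tx) : ℝ :=
  v T / 3 ^ T.card

/-- Execution times of `tx1 ≃ (1,{k1})`, `tx2 ≃ (1,{k2})` (indices `0,1`). -/
noncomputable def tTx17 : Fin 2 → ℝ := ![1, 1]

/-- Storage key sets (keys `k1 = 0`, `k2 = 1`). -/
def keysTx17 : Fin 2 → Finset (Fin 2) := ![{0}, {1}]

theorem sum_xsmGas_self {Tx : Type} [DecidableEq Tx] (v : Finset Tx → ℝ) (T : Finset Tx) :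
    ∑ tx ∈ T, xsmGas v T tx = T.card * v T / 3 ^ T.card := by
  simp only [xsmGas, Finset.sum_const, nsmul_eq_mul, mul_div_assoc]

/-- With at least as many threads as transactions, and unit-time transactions on pairwise
disjoint keys, every nonempty batch runs fully in parallel, so the optimal makespan is `1`. -/
noncomputable def parallelMakespan {α : Type} (A : Finset α) : ℝ :=
  if A.Nonempty then 1 else 0

theorem parallelMakespan_mono {α : Type} : Monotone (parallelMakespan (α := α)) := by
  intro A B hAB
  unfold parallelMakespan
  split_ifs with hA hB
  · rfl
  · exact absurd (hA.mono hAB) hB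
  · exact zero_le_one
  · rfl

@[simp]
theorem parallelMakespan_empty {α : Type} : parallelMakespan (∅ : Finset α) = 0 := by
  simp [parallelMakespan]

@[simp]
theorem parallelMakespan_insert {α : Type} [DecidableEq α] (a : α) (A : Finset α) :
    parallelMakespan (insert a A) = 1 := by
  simp [parallelMakespan]

/-- The XSM GCM does not satisfy Set Inclusion: there are a
makespan function `v` satisfying (S1)–(S4) (the optimal-scheduler makespan on
at least 2 threads, so `v(T1) = v(T2) = 1`), the set `T = ∅`, and sets
`T1 = {tx1} ⊆ T2 = {tx1, tx2}` disjoint from `T` with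
`gas^XSM_{T1}(T1) = 1/3 > 2/9 = gas^XSM_{T2}(T2)`. -/
theorem xsmGas_not_set_inclusion :
    ∃ v : Finset (Fin 2) → ℝ,
      -- (S1) monotonicity in T
      (∀ A B : Finset (Fin 2), A ⊆ B → v A ≤ v B) ∧
      -- (S2) monotonicity under bundling
      (∀ (T : Finset (Fin 2)) (a b c : Fin 2), a ∉ T → b ∉ T → c ∉ T → a ≠ b →
        tTx17 c = tTx17 a + tTx17 b → keysTx17 c = keysTx17 a ∪ keysTx17 b →
        v (insert a (insert b T)) ≤ v (insert c T)) ∧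
      -- (S3) monotonicity in t and K
      (∀ (T : Finset (Fin 2)) (a b : Fin 2), a ∉ T → b ∉ T →
        tTx17 a ≤ tTx17 b → keysTx17 a ⊆ keysTx17 b →
        v (insert a T) ≤ v (insert b T)) ∧
      -- (S4) empty set
      v ∅ = 0 ∧
      -- makespans
      v ({0} : Finset (Fin 2)) = 1 ∧ v ({0, 1} : Finset (Fin 2)) = 1 ∧
      -- the total gas values
      (∑ tx ∈ ({0} : Finset (Fin 2)), xsmGas v ({0} : Finset (Fin 2)) tx) = 1 / 3 ∧
      (∑ tx ∈ ({0, 1} : Finset (Fin 2)), xsmGas v ({0, 1} : Finset (Fin 2)) tx) = 2 / 9 ∧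
      (∑ tx ∈ ({0} : Finset (Fin 2)), xsmGas v ({0} : Finset (Fin 2)) tx)
        > (∑ tx ∈ ({0, 1} : Finset (Fin 2)), xsmGas v ({0, 1} : Finset (Fin 2)) tx) := by
  have gas_one : ∑ tx ∈ ({0} : Finset (Fin 2)), xsmGas parallelMakespan {0} tx = 1 / 3 := by
    rw [sum_xsmGas_self, ← insert_empty_eq, parallelMakespan_insert]
    norm_num
  have gas_two : ∑ tx ∈ ({0, 1} : Finset (Fin 2)), xsmGas parallelMakespan {0, 1} tx = 2 / 9 := by
    rw [sum_xsmGas_self, parallelMakespan_insert]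
    norm_num
  refine ⟨parallelMakespan, fun _ _ h => parallelMakespan_mono h, ?_, ?_,
    parallelMakespan_empty, ?_, parallelMakespan_insert _ _, gas_one, gas_two, ?_⟩
  · simp
  · simp
  · rw [← insert_empty_eq, parallelMakespan_insert]
  · rw [gas_one, gas_two]
    norm_num
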